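/- On the Poisson algebra ℂ(x_1,...,x_g)[y_1,...,y_g] with brackets {x_α, y_β} = −2Π(x_α)δ_{αβ}, {x_α, x_β} = {y_α, y_β} = 0, where Π(X) = ∏_{i=1}^{g+3}(X − a_i), the series Y(t) = ∑_α (y_α/Π(x_α))/(t − x_α) satisfies {Y(t), Y(s)} = (2/(s−t)) ( ∂_s Y(s) + ∂_t Y(t) − (2/(s−t))(Y(s) − Y(t)) ). -/

import Mathlib

open Finset

/-- Partial derivative in the variable `x_α` of a function `F(x, y)` on `ℂ^g × ℂ^g`. -/
noncomputable def pdx (g : ℕ) (F : (Fin g → ℂ) → (Fin g → ℂ) → ℂ) (α : Fin g)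
    (x y : Fin g → ℂ) : ℂ :=
  deriv (fun z => F (Function.update x α z) y) (x α)

/-- Partial derivative in the variable `y_α` of a function `F(x, y)` on `ℂ^g × ℂ^g`. -/
noncomputable def pdy (g : ℕ) (F : (Fin g → ℂ) → (Fin g → ℂ) → ℂ) (α : Fin g)
    (x y : Fin g → ℂ) : ℂ :=
  deriv (fun z => F x (Function.update y α z)) (y α)

/-- The Poisson bracket on functions of `(x, y)` determined by
`{x_α, y_β} = -2 Π(x_α) δ_{αβ}`, `{x_α, x_β} = {y_α, y_β} = 0`, where
`Π(X) = ∏_{i=1}^{g+3} (X - a_i)`. -/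
noncomputable def PB (g : ℕ) (a : Fin (g+3) → ℂ)
    (F G : (Fin g → ℂ) → (Fin g → ℂ) → ℂ) (x y : Fin g → ℂ) : ℂ :=
  ∑ α, (-2 * ∏ i, (x α - a i)) *
    (pdx g F α x y * pdy g G α x y - pdy g F α x y * pdx g G α x y)

/-!
Both `Y(t)` and `Y(s)` are sums of functions of the single pair `(x_α, y_α)`, so the bracket splits
into one contribution per `α`, and each side of the identity is a sum over `α` of the same
rational function of `x_α, y_α, s, t`. Since `Y` is linear in `y_α`, the derivative of `1/Π` enters
the two cross terms of the bracket symmetrically and cancels; what remains is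
`-2 y_α (s - t) / (Π(x_α) (s - x_α)² (t - x_α)²)`.
-/

section Separable

variable {g : ℕ} (f : ℂ → ℂ → ℂ) (α : Fin g) (x y : Fin g → ℂ)

lemma sum_update_eq_add_sum_erase (z : ℂ) :
    ∑ β, f (Function.update x α z β) (y β) = f z (y α) + ∑ β ∈ univ.erase α, f (x β) (y β) := by
  rw [← add_sum_erase _ _ (mem_univ α), Function.update_self]
  congr 1
  exact sum_congr rfl fun β hβ => by rw [Function.update_of_ne (ne_of_mem_erase hβ)]

lemma pdx_sum_apply :
    pdx g (fun x' y' => ∑ β, f (x' β) (y' β)) α x y = deriv (fun z => f z (y α)) (x α) := by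
  simp only [pdx, sum_update_eq_add_sum_erase, deriv_add_const]

lemma pdy_sum_apply :
    pdy g (fun x' y' => ∑ β, f (x' β) (y' β)) α x y = deriv (fun w => f (x α) w) (y α) := by
  simp only [pdy, sum_update_eq_add_sum_erase (fun w z => f z w), deriv_add_const]

end Separable

section Derivatives

variable {𝕜 : Type*} [NontriviallyNormedField 𝕜]

lemma hasDerivAt_sum_div_sub {ι : Type*} (S : Finset ι) (c x : ι → 𝕜) {s : 𝕜}
    (hs : ∀ α, s ≠ x α) :
    HasDerivAt (fun σ => ∑ α ∈ S, c α / (σ - x α)) (∑ α ∈ S, -(c α / (s - x α) ^ 2)) s := by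
  refine HasDerivAt.fun_sum fun α _ => ?_
  refine ((hasDerivAt_const s (c α)).fun_div ((hasDerivAt_id' s).sub_const (x α))
    (sub_ne_zero.mpr (hs α))).congr_deriv ?_
  ring

lemma deriv_div_const_div_const (c d : 𝕜) : deriv (fun w => w / c / d) = fun _ => 1 / c / d := by
  funext w
  simp only [deriv_div_const, deriv_id'']

lemma hasDerivAt_const_div_div_sub {P : 𝕜 → 𝕜} {P' t z : 𝕜} (hP : HasDerivAt P P' z)
    (hPz : P z ≠ 0) (ht : t ≠ z) (w : 𝕜) :
    HasDerivAt (fun z => w / P z / (t - z))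
      (w * (-P' / P z ^ 2 / (t - z) + 1 / P z / (t - z) ^ 2)) z := by
  refine (((hasDerivAt_const z w).fun_div hP hPz).fun_div ((hasDerivAt_id' z).const_sub t)
    (sub_ne_zero.mpr ht)).congr_deriv ?_
  have := sub_ne_zero.mpr ht
  field_simp
  ring

end Derivatives

/-- The `P'`-terms cancel, and both sides equal `-2 w (s - t) / (P (s - z)² (t - z)²)`, the right
side through `1/u² + 1/v² - 2/(u v) = (1/u - 1/v)²`. -/
lemma bracket_summand_eq {K : Type*} [Field K] {P P' w z s t : K} (hP : P ≠ 0) (hs : s ≠ z)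
    (ht : t ≠ z) (hst : s ≠ t) :
    -2 * P * (w * (-P' / P ^ 2 / (t - z) + 1 / P / (t - z) ^ 2) * (1 / P / (s - z))
        - 1 / P / (t - z) * (w * (-P' / P ^ 2 / (s - z) + 1 / P / (s - z) ^ 2)))
      = 2 / (s - t) * (-(w / P / (s - z) ^ 2) + -(w / P / (t - z) ^ 2)
          - 2 / (s - t) * (w / P / (s - z) - w / P / (t - z))) := by
  have := sub_ne_zero.mpr hs
  have := sub_ne_zero.mpr ht
  have := sub_ne_zero.mpr hst
  field_simp
  ring

theorem stmt_11_general (g : ℕ) (a : Fin (g+3) → ℂ) :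
    ∀ x y : Fin g → ℂ, Function.Injective x → (∀ α i, x α ≠ a i) →
    ∀ s t : ℂ, s ≠ t → (∀ α, s ≠ x α) → (∀ α, t ≠ x α) →
      PB g a (fun x' y' => ∑ α, (y' α / ∏ i, (x' α - a i)) / (t - x' α))
             (fun x' y' => ∑ α, (y' α / ∏ i, (x' α - a i)) / (s - x' α)) x y
        = (2 / (s - t)) *
            (deriv (fun σ => ∑ α, (y α / ∏ i, (x α - a i)) / (σ - x α)) s
             + deriv (fun τ => ∑ α, (y α / ∏ i, (x α - a i)) / (τ - x α)) t
             - (2 / (s - t)) *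
                 ((∑ α, (y α / ∏ i, (x α - a i)) / (s - x α))
                  - ∑ α, (y α / ∏ i, (x α - a i)) / (t - x α))) := by
  intro x y _ hxa s t hst hs ht
  set P : ℂ → ℂ := fun z => ∏ i, (z - a i)
  have hP : ∀ α, P (x α) ≠ 0 := fun α =>
    prod_ne_zero_iff.mpr fun i _ => sub_ne_zero.mpr (hxa α i)
  have hP' : ∀ z, HasDerivAt P (deriv P z) z := fun z =>
    (DifferentiableAt.fun_finsetProd fun i _ => differentiableAt_id.sub_const (a i)).hasDerivAt
  rw [(hasDerivAt_sum_div_sub _ _ _ hs).deriv, (hasDerivAt_sum_div_sub _ _ _ ht).deriv, PB,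
    ← sum_add_distrib, ← sum_sub_distrib, mul_sum, ← sum_sub_distrib, mul_sum]
  refine sum_congr rfl fun α _ => ?_
  rw [pdx_sum_apply (fun z w => w / P z / (t - z)), pdx_sum_apply (fun z w => w / P z / (s - z)),
    pdy_sum_apply (fun z w => w / P z / (t - z)), pdy_sum_apply (fun z w => w / P z / (s - z)),
    (hasDerivAt_const_div_div_sub (hP' _) (hP α) (ht α) _).deriv,
    (hasDerivAt_const_div_div_sub (hP' _) (hP α) (hs α) _).deriv,
    deriv_div_const_div_const, deriv_div_const_div_const]
  exact bracket_summand_eq (hP α) (hs α) (ht α) hst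

/-- in the Poisson algebra `ℂ(x₁,…,x_g)[y₁,…,y_g]` with
`{x_α, y_β} = -2Π(x_α)δ_{αβ}`, the series `Y(t) = ∑_α (y_α/Π(x_α))/(t - x_α)` satisfies
`{Y(t), Y(s)} = (2/(s-t)) (∂_s Y(s) + ∂_t Y(t) - (2/(s-t))(Y(s) - Y(t)))`
(stated pointwise away from the poles). -/
theorem stmt_11 (g : ℕ) (hg : 1 ≤ g) (a : Fin (g+3) → ℂ) (ha : Function.Injective a) :
    ∀ x y : Fin g → ℂ, Function.Injective x → (∀ α i, x α ≠ a i) →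
    ∀ s t : ℂ, s ≠ t → (∀ α, s ≠ x α) → (∀ α, t ≠ x α) →
      PB g a (fun x' y' => ∑ α, (y' α / ∏ i, (x' α - a i)) / (t - x' α))
             (fun x' y' => ∑ α, (y' α / ∏ i, (x' α - a i)) / (s - x' α)) x y
        = (2 / (s - t)) *
            (deriv (fun σ => ∑ α, (y α / ∏ i, (x α - a i)) / (σ - x α)) s
             + deriv (fun τ => ∑ α, (y α / ∏ i, (x α - a i)) / (τ - x α)) t
             - (2 / (s - t)) *
                 ((∑ α, (y α / ∏ i, (x α - a i)) / (s - x α))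
                  - ∑ α, (y α / ∏ i, (x α - a i)) / (t - x α))) :=
  stmt_11_general g a
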